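/- Let X_1, ..., X_n be i.i.d. with CDF P(x) = 1 - (1 - x/b)^a on [0, b], a ≥ 1, 0 < b ≤ 1. Then E[max_{t≤n} X_t] ≥ b(1 - Γ(1/a + 1)(n + 1/a)^{-1/a}). -/

import Mathlib

open Real MeasureTheory intervalIntegral Set

noncomputable def Jint (a : ℝ) (n : ℕ) : ℝ := ∫ u in (0:ℝ)..1, (1 - u ^ a) ^ n

lemma contJ (a : ℝ) (ha : 0 ≤ a) (n : ℕ) : Continuous (fun u : ℝ => (1 - u ^ a) ^ n) :=
  (continuous_const.sub (Real.continuous_rpow_const ha)).pow n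

lemma rec_lemma (a : ℝ) (ha : 1 ≤ a) (n : ℕ) :
    (1 + ((n : ℝ) + 1) * a) * Jint a (n + 1) = ((n : ℝ) + 1) * a * Jint a n := by
  have ha0 : (0:ℝ) < a := lt_of_lt_of_le one_pos ha
  set f : ℝ → ℝ := fun u => u * (1 - u ^ a) ^ (n + 1) with hf
  set f' : ℝ → ℝ := fun u =>
    (1 - u ^ a) ^ (n + 1) + u * ((((n:ℝ) + 1) * (1 - u ^ a) ^ n) * (-(a * u ^ (a - 1)))) with hf'
  have hderiv : ∀ u : ℝ, HasDerivAt f (f' u) u := by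
    intro u
    have h1 : HasDerivAt (fun u : ℝ => u ^ a) (a * u ^ (a - 1)) u :=
      Real.hasDerivAt_rpow_const (Or.inr ha)
    have h2 : HasDerivAt (fun u : ℝ => 1 - u ^ a) (-(a * u ^ (a - 1))) u :=
      by simpa using (hasDerivAt_const u 1).fun_sub h1
    have h3 : HasDerivAt (fun u : ℝ => (1 - u ^ a) ^ (n + 1))
        ((((n:ℝ) + 1) * (1 - u ^ a) ^ n) * (-(a * u ^ (a - 1)))) u := by
      have := h2.fun_pow (n + 1)
      simpa using this
    have h4 := (hasDerivAt_id u).fun_mul h3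
    simpa [hf, hf', mul_comm] using h4
  have hcontpow : Continuous fun u : ℝ => u ^ (a - 1) :=
    Real.continuous_rpow_const (by linarith)
  have hcf' : Continuous f' := by
    apply (contJ a ha0.le (n+1)).add
    exact continuous_id.mul (((continuous_const.mul (contJ a ha0.le n)).mul
      ((continuous_const.mul hcontpow).neg)))
  have hFTC : ∫ u in (0:ℝ)..1, f' u = f 1 - f 0 :=
    intervalIntegral.integral_eq_sub_of_hasDerivAt (fun u _ => hderiv u)
      (hcf'.intervalIntegrable 0 1)
  have hends : f 1 - f 0 = 0 := by simp [hf]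
  have hcongr : ∫ u in (0:ℝ)..1, f' u
      = ∫ u in (0:ℝ)..1, ((1 + ((n:ℝ)+1)*a) * (1 - u ^ a) ^ (n+1)
          - ((n:ℝ)+1)*a * (1 - u ^ a) ^ n) := by
    apply intervalIntegral.integral_congr
    intro u hu
    rw [uIcc_of_le (by norm_num : (0:ℝ) ≤ 1)] at hu
    have hu0 : 0 ≤ u := hu.1
    have hmul : u * u ^ (a - 1) = u ^ a := by
      rcases eq_or_lt_of_le hu0 with h | h
      · rw [← h, Real.zero_rpow (by linarith : a ≠ 0)]
        simp
      · rw [mul_comm, ← Real.rpow_add_one (ne_of_gt h)]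
        ring_nf
    simp only [hf']
    have expand : u * ((((n:ℝ) + 1) * (1 - u ^ a) ^ n) * (-(a * u ^ (a - 1))))
        = -(((n:ℝ)+1) * a * (u * u ^ (a-1)) * (1 - u ^ a) ^ n) := by ring
    rw [expand, hmul]
    have : u ^ a = 1 - (1 - u ^ a) := by ring
    rw [this]
    ring
  have hint1 : IntervalIntegrable (fun u : ℝ => (1 - u ^ a) ^ (n+1)) volume 0 1 :=
    (contJ a ha0.le (n+1)).intervalIntegrable 0 1
  have hint2 : IntervalIntegrable (fun u : ℝ => (1 - u ^ a) ^ n) volume 0 1 :=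
    (contJ a ha0.le n).intervalIntegrable 0 1
  have hsplit : ∫ u in (0:ℝ)..1, ((1 + ((n:ℝ)+1)*a) * (1 - u ^ a) ^ (n+1)
          - ((n:ℝ)+1)*a * (1 - u ^ a) ^ n)
      = (1 + ((n:ℝ)+1)*a) * Jint a (n+1) - ((n:ℝ)+1)*a * Jint a n := by
    rw [intervalIntegral.integral_sub ((hint1.const_mul _)) ((hint2.const_mul _)),
      intervalIntegral.integral_const_mul, intervalIntegral.integral_const_mul]
    rfl
  have := hFTC.symm.trans (hcongr.trans hsplit)
  rw [hends] at this
  linarith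

lemma gautschi (s : ℝ) (hs0 : 0 < s) (hs1 : s ≤ 1) (x : ℝ) (hx : 0 < x) :
    Real.Gamma (x + 1) ≤ Real.Gamma (x + 1 + s) * (x + s) ^ (-s) := by
  have hxs : (0:ℝ) < x + s := by linarith
  have hx1s : (0:ℝ) < x + 1 + s := by linarith
  have hG1 : 0 < Real.Gamma (x + 1 + s) := Real.Gamma_pos_of_pos hx1s
  have hG2 : 0 < Real.Gamma (x + s) := Real.Gamma_pos_of_pos hxs
  have hG0 : 0 < Real.Gamma (x + 1) := Real.Gamma_pos_of_pos (by linarith)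
  have hconv := Real.convexOn_log_Gamma.2 (Set.mem_Ioi.mpr hx1s) (Set.mem_Ioi.mpr hxs)
    (by linarith : (0:ℝ) ≤ 1 - s) hs0.le (by ring)
  have hcomb : (1 - s) • (x + 1 + s) + s • (x + s) = x + 1 := by
    simp only [smul_eq_mul]; ring
  rw [hcomb] at hconv
  simp only [Function.comp_apply, smul_eq_mul] at hconv
  have hexp := Real.exp_le_exp.mpr hconv
  rw [Real.exp_log hG0, Real.exp_add] at hexp
  have e1 : Real.exp ((1 - s) * Real.log (Real.Gamma (x + 1 + s)))
      = Real.Gamma (x + 1 + s) ^ (1 - s) := by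
    rw [← Real.log_rpow hG1, Real.exp_log (Real.rpow_pos_of_pos hG1 _)]
  have e2 : Real.exp (s * Real.log (Real.Gamma (x + s)))
      = Real.Gamma (x + s) ^ s := by
    rw [← Real.log_rpow hG2, Real.exp_log (Real.rpow_pos_of_pos hG2 _)]
  rw [e1, e2] at hexp
  have hGadd : Real.Gamma (x + s) = Real.Gamma (x + 1 + s) / (x + s) := by
    have := Real.Gamma_add_one (ne_of_gt hxs)
    rw [eq_div_iff (ne_of_gt hxs)]
    rw [show x + 1 + s = x + s + 1 by ring, this]
    ring
  rw [hGadd, Real.div_rpow hG1.le hxs.le] at hexp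
  calc Real.Gamma (x + 1)
      ≤ Real.Gamma (x + 1 + s) ^ (1 - s) * (Real.Gamma (x + 1 + s) ^ s / (x + s) ^ s) := hexp
    _ = Real.Gamma (x + 1 + s) * (x + s) ^ (-s) := by
        rw [Real.rpow_neg hxs.le, div_eq_mul_inv, ← mul_assoc,
          ← Real.rpow_add hG1]
        norm_num

lemma Jform (a : ℝ) (ha : 1 ≤ a) (n : ℕ) :
    Real.Gamma ((n : ℝ) + 1 + 1 / a) * Jint a n = Real.Gamma (1 / a + 1) * (Nat.factorial n : ℝ) := by
  have ha0 : (0:ℝ) < a := lt_of_lt_of_le one_pos ha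
  induction n with
  | zero =>
      have : Jint a 0 = 1 := by simp [Jint]
      rw [this]
      norm_num [add_comm]
  | succ n ih =>
      have hrec := rec_lemma a ha n
      have hrec' : ((n:ℝ) + 1 + 1/a) * Jint a (n+1) = ((n:ℝ) + 1) * Jint a n := by
        have h := congrArg (fun t => (1/a) * t) hrec
        field_simp at h ⊢
        linarith
      have hpos : ((n:ℝ) + 1 + 1/a) ≠ 0 := by positivity
      have hGadd : Real.Gamma (((n:ℕ)+1 : ℝ) + 1 + 1/a)
          = ((n:ℝ) + 1 + 1/a) * Real.Gamma ((n:ℝ) + 1 + 1/a) := by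
        rw [show (((n:ℕ)+1 : ℝ) + 1 + 1/a) = ((n:ℝ) + 1 + 1/a) + 1 by push_cast; ring]
        exact Real.Gamma_add_one hpos
      push_cast
      push_cast at hGadd
      rw [hGadd]
      calc ((n:ℝ) + 1 + 1/a) * Real.Gamma ((n:ℝ) + 1 + 1/a) * Jint a (n+1)
          = Real.Gamma ((n:ℝ) + 1 + 1/a) * (((n:ℝ) + 1 + 1/a) * Jint a (n+1)) := by ring
        _ = Real.Gamma ((n:ℝ) + 1 + 1/a) * (((n:ℝ) + 1) * Jint a n) := by rw [hrec']
        _ = ((n:ℝ) + 1) * (Real.Gamma ((n:ℝ) + 1 + 1/a) * Jint a n) := by ring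
        _ = ((n:ℝ) + 1) * (Real.Gamma (1/a + 1) * (Nat.factorial n : ℝ)) := by rw [ih]
        _ = Real.Gamma (1/a + 1) * ((Nat.factorial n : ℝ) * ((n:ℝ) + 1)) := by ring
        _ = Real.Gamma (1/a + 1) * ((Nat.factorial (n+1) : ℕ) : ℝ) := by
            rw [Nat.factorial_succ]; push_cast; ring

lemma Jbound (a : ℝ) (ha : 1 ≤ a) (n : ℕ) (hn : 1 ≤ n) :
    Jint a n ≤ Real.Gamma (1 / a + 1) * ((n : ℝ) + 1 / a) ^ (-(1 / a)) := by
  have ha0 : (0:ℝ) < a := lt_of_lt_of_le one_pos ha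
  have hs0 : (0:ℝ) < 1/a := by positivity
  have hs1 : 1/a ≤ 1 := by rw [div_le_one ha0]; exact ha
  have hx : (0:ℝ) < (n:ℝ) := by exact_mod_cast hn
  have hga := gautschi (1/a) hs0 hs1 (n:ℝ) hx
  have hGn : Real.Gamma ((n:ℝ) + 1) = (Nat.factorial n : ℝ) := Real.Gamma_nat_eq_factorial n
  have hGpos : 0 < Real.Gamma ((n:ℝ) + 1 + 1/a) := Real.Gamma_pos_of_pos (by positivity)
  have hGs : 0 < Real.Gamma (1/a + 1) := Real.Gamma_pos_of_pos (by positivity)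
  have hform := Jform a ha n
  rw [← hGn] at hform
  have : Real.Gamma ((n:ℝ) + 1 + 1/a) * Jint a n
      ≤ Real.Gamma ((n:ℝ) + 1 + 1/a) * (Real.Gamma (1/a + 1) * ((n:ℝ) + 1/a) ^ (-(1/a))) := by
    rw [hform]
    calc Real.Gamma (1/a+1) * Real.Gamma ((n:ℝ)+1)
        ≤ Real.Gamma (1/a+1) * (Real.Gamma ((n:ℝ)+1+1/a) * ((n:ℝ)+1/a) ^ (-(1/a))) :=
          mul_le_mul_of_nonneg_left hga hGs.le
      _ = Real.Gamma ((n:ℝ)+1+1/a) * (Real.Gamma (1/a+1) * ((n:ℝ)+1/a) ^ (-(1/a))) := by ring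
  exact le_of_mul_le_mul_left this hGpos

/-- For i.i.d. samples with CDF `P x = 1 - (1-x/b)^a` on `[0,b]` (`a ≥ 1`, `0 < b ≤ 1`),
the expectation of the maximum of `n` samples (computed against the density
`n ρ(x) P(x)^(n-1)`, `ρ x = (a/b)(1-x/b)^(a-1)`) is at least
`b (1 - Γ(1/a+1) (n + 1/a)^{-1/a})`. -/
theorem stmt8 (a b : ℝ) (ha : 1 ≤ a) (hb0 : 0 < b) (hb1 : b ≤ 1)
    (n : ℕ) (hn : 1 ≤ n) :
    b * (1 - Real.Gamma (1 / a + 1) * ((n : ℝ) + 1 / a) ^ (-(1 / a)))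
      ≤ ∫ x in (0:ℝ)..b,
          x * ((n : ℝ) * ((a / b) * (1 - x / b) ^ (a - 1)) *
            (1 - (1 - x / b) ^ a) ^ (n - 1)) := by
  have ha0 : (0:ℝ) < a := lt_of_lt_of_le one_pos ha
  have hbne : b ≠ 0 := ne_of_gt hb0
  set g : ℝ → ℝ := fun x => (1 - (1 - x / b) ^ a) ^ n with hg
  set G : ℝ → ℝ := fun x =>
    (n : ℝ) * (1 - (1 - x / b) ^ a) ^ (n - 1) * (a * (1 - x / b) ^ (a - 1) * (1 / b)) with hG
  -- continuity
  have hcontg : Continuous g :=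
    (continuous_const.sub ((Real.continuous_rpow_const ha0.le).comp
      (continuous_const.sub (continuous_id.div_const b)))).pow n
  have hcontG : Continuous G := by
    apply Continuous.mul
    · exact continuous_const.mul ((continuous_const.sub
        ((Real.continuous_rpow_const ha0.le).comp
          (continuous_const.sub (continuous_id.div_const b)))).pow (n-1))
    · exact (continuous_const.mul ((Real.continuous_rpow_const (by linarith)).comp
        (continuous_const.sub (continuous_id.div_const b)))).mul continuous_const
  -- derivative of x * g x
  have hderiv : ∀ x : ℝ, HasDerivAt (fun x => x * g x) (g x + x * G x) x := by
    intro x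
    have h1 : HasDerivAt (fun x : ℝ => 1 - x / b) (-(1/b)) x := by
      simpa using (hasDerivAt_const x (1:ℝ)).fun_sub ((hasDerivAt_id x).div_const b)
    have h2 : HasDerivAt (fun x : ℝ => (1 - x / b) ^ a)
        (a * (1 - x / b) ^ (a - 1) * (-(1/b))) x :=
      by simpa [mul_comm, mul_left_comm, mul_assoc] using h1.rpow_const (Or.inr ha)
    have h3 : HasDerivAt (fun x : ℝ => 1 - (1 - x / b) ^ a)
        (a * (1 - x / b) ^ (a - 1) * (1/b)) x := by
      simpa using (hasDerivAt_const x (1:ℝ)).fun_sub h2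
    have h4 : HasDerivAt g
        ((n : ℝ) * (1 - (1 - x / b) ^ a) ^ (n - 1) * (a * (1 - x / b) ^ (a - 1) * (1/b))) x := by
      simpa using h3.fun_pow n
    have h5 := (hasDerivAt_id x).fun_mul h4
    simpa [hG, mul_comm] using h5
  have hgb : g b = 1 := by
    simp [hg, div_self hbne, Real.zero_rpow (ne_of_gt ha0)]
  have hg0 : g 0 = 0 := by
    have : (1:ℝ) - 0 / b = 1 := by simp
    simp [hg, this, Real.one_rpow, zero_pow (by omega : n ≠ 0)]
  have hFTC : ∫ x in (0:ℝ)..b, (g x + x * G x) = b := by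
    rw [intervalIntegral.integral_eq_sub_of_hasDerivAt (fun x _ => hderiv x)
      ((hcontg.add (continuous_id.mul hcontG)).intervalIntegrable 0 b)]
    rw [hgb, hg0]; ring
  have hsplit : ∫ x in (0:ℝ)..b, (g x + x * G x)
      = (∫ x in (0:ℝ)..b, g x) + ∫ x in (0:ℝ)..b, x * G x := by
    exact intervalIntegral.integral_add (hcontg.intervalIntegrable 0 b)
      ((continuous_id.mul hcontG).intervalIntegrable 0 b)
  -- substitution for ∫ g
  have hsub : (∫ x in (0:ℝ)..b, g x) = b * Jint a n := by
    have h1 : (∫ x in (0:ℝ)..b, g x)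
        = b • ∫ y in (0:ℝ)/b..b/b, (1 - (1 - y) ^ a) ^ n := by
      exact intervalIntegral.integral_comp_div
        (f := fun y => (1 - (1 - y) ^ a) ^ n) hbne
    rw [h1, zero_div, div_self hbne, smul_eq_mul]
    congr 1
    have h2 := intervalIntegral.integral_comp_sub_left
      (a := (0:ℝ)) (b := 1) (fun u => (1 - u ^ a) ^ n) 1
    norm_num at h2
    rw [h2]; rfl
  have hxg : ∫ x in (0:ℝ)..b, x * G x = b - b * Jint a n := by
    have h := hFTC
    rw [hsplit, hsub] at h
    linarith
  have hinteg : (∫ x in (0:ℝ)..b,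
          x * ((n : ℝ) * ((a / b) * (1 - x / b) ^ (a - 1)) *
            (1 - (1 - x / b) ^ a) ^ (n - 1))) = ∫ x in (0:ℝ)..b, x * G x := by
    apply intervalIntegral.integral_congr
    intro x _
    simp only [hG]
    ring
  rw [hinteg, hxg]
  nlinarith [Jbound a ha n hn, hb0.le]
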